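/- arXiv:math/0111213 — 2 statements merged into one kernel-verified Lean document; each statement's English description precedes it below -/
import Mathlib

section
/- Let X be a metric space, V a real vector space of finite dimension r, ρ a Glaeser operation, and E a bundle over X. Then the function a ↦ dim (ρ^{2r}(E))_a is upper-semicontinuous on X. -/
/-- A bundle of linear subspaces of `V` over `X`: each fibre is a linear subspace. -/
def IsBundle {X V : Type*} [AddCommGroup V] [Module ℝ V] (E : Set (X × V)) : Prop :=
  ∀ a : X, ∃ S : Submodule ℝ V, {v : V | (a, v) ∈ E} = (S : Set V)

/-- A Glaeser operation on bundles of linear subspaces of `V` over `X`: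
it maps bundles to bundles, contains the closure, and is local. -/
structure IsGlaeserOperation {X V : Type*} [MetricSpace X] [NormedAddCommGroup V]
    [NormedSpace ℝ V] (ρ : Set (X × V) → Set (X × V)) : Prop where
  bundle : ∀ E : Set (X × V), IsBundle E → IsBundle (ρ E)
  closure_subset : ∀ E : Set (X × V), IsBundle E → closure E ⊆ ρ E
  isLocal : ∀ E F : Set (X × V), IsBundle E → IsBundle F → ∀ U : Set X, IsOpen U →
    (∀ a ∈ U, {v : V | (a, v) ∈ E} = {v : V | (a, v) ∈ F}) →
    ∀ a ∈ U, {v : V | (a, v) ∈ ρ E} = {v : V | (a, v) ∈ ρ F}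

/-!
The basic estimate is that the fibre dimension of a bundle `F` near `x` is at most the
dimension of the span of the fibre of `closure F` at `x`, hence of `ρ F` at `x`. To see it, take a
complement `W'` of that span: the compact set of unit vectors of `W'` is disjoint from the
fibre of `closure F` at `x`, so by the tube lemma the nearby fibres of `F` meet `W'` only in `0`.

Since `E ⊆ ρ E`, the iterates `ρ^[k] E` increase. If `dim (ρ^[2m+2] E)_x ≤ m`, then near `x`
either `ρ^[2m+1] E` has the same fibre as `ρ^[2m] E`, or `dim (ρ^[2m] E)_y ≤ m - 1` and by
induction the iterates already stabilise at `y`. So the two iterates agree on a neighbourhood of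
`x`, and locality of `ρ` makes all later iterates agree there. With `m = r` this gives
`(ρ^[2r+1] E)_a = (ρ^[2r] E)_a`, and the basic estimate for `F = ρ^[2r] E` is the theorem.
-/

open Filter Topology Module

section Fibre

variable {X V : Type*}

def fibre (E : Set (X × V)) (a : X) : Set V := {v : V | (a, v) ∈ E}

theorem fibre_mono {E F : Set (X × V)} (h : E ⊆ F) (a : X) : fibre E a ⊆ fibre F a :=
  fun _ hv => h hv

variable [AddCommGroup V] [Module ℝ V]

noncomputable def fibreDim (E : Set (X × V)) (a : X) : ℕ :=
  finrank ℝ (Submodule.span ℝ (fibre E a))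

theorem fibreDim_mono [FiniteDimensional ℝ V] {E F : Set (X × V)} (h : E ⊆ F) (a : X) :
    fibreDim E a ≤ fibreDim F a :=
  Submodule.finrank_mono (Submodule.span_mono (fibre_mono h a))

theorem IsBundle.coe_span_fibre {E : Set (X × V)} (hE : IsBundle E) (a : X) :
    (Submodule.span ℝ (fibre E a) : Set V) = fibre E a := by
  obtain ⟨S, hS⟩ := hE a
  rw [fibre, hS, Submodule.span_eq]

theorem IsBundle.fibre_eq_of_subset_of_fibreDim_le [FiniteDimensional ℝ V] {E F : Set (X × V)}
    (hE : IsBundle E) (hF : IsBundle F) (hEF : E ⊆ F) {a : X} (h : fibreDim F a ≤ fibreDim E a) :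
    fibre E a = fibre F a := by
  rw [← hE.coe_span_fibre, ← hF.coe_span_fibre,
    Submodule.eq_of_le_of_finrank_le (Submodule.span_mono (fibre_mono hEF a)) h]

end Fibre

section Closure

variable {X V : Type*} [TopologicalSpace X] [NormedAddCommGroup V] [NormedSpace ℝ V]
  [FiniteDimensional ℝ V]

theorem IsBundle.eventually_fibreDim_le_closure {F : Set (X × V)} (hF : IsBundle F) (x : X) :
    ∀ᶠ y in 𝓝 x, fibreDim F y ≤ fibreDim (closure F) x := by
  set W := Submodule.span ℝ (fibre (closure F) x)
  obtain ⟨W', hW⟩ := W.exists_isCompl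
  set K := (W' : Set V) ∩ Metric.sphere 0 1
  have hK : IsCompact K := (isCompact_sphere 0 1).inter_left W'.closed_of_finiteDimensional
  have hfar : ∀ᶠ y in 𝓝 x, ∀ v ∈ K, (y, v) ∉ F := by
    refine hK.eventually_forall_of_forall_eventually fun v ⟨hvW', hv⟩ => ?_
    have hx : (x, v) ∉ closure F := fun hcl => by
      have hv0 : v ∈ W ⊓ W' := ⟨Submodule.subset_span hcl, hvW'⟩
      rw [hW.inf_eq_bot, Submodule.mem_bot] at hv0
      simp [hv0] at hv
    simpa [mem_closure_iff_frequently] using hx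
  filter_upwards [hfar] with y hy
  obtain ⟨S, hS⟩ := hF y
  have hdisj : Disjoint S W' := by
    refine Submodule.disjoint_def.mpr fun w hwS hwW' => by_contra fun hw => ?_
    refine hy (‖w‖⁻¹ • w) ⟨W'.smul_mem _ hwW', by simp [norm_smul, hw]⟩ ?_
    exact (hS.ge : (S : Set V) ⊆ fibre F y) (S.smul_mem _ hwS)
  have hspan : Submodule.span ℝ (fibre F y) = S := by
    rw [fibre, hS, Submodule.span_eq]
  have := Submodule.finrank_add_finrank_le_of_disjoint hdisj
  have := Submodule.finrank_add_eq_of_isCompl hW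
  change finrank ℝ (Submodule.span ℝ (fibre F y)) ≤ finrank ℝ W
  rw [hspan]
  omega

end Closure

namespace IsGlaeserOperation

variable {X V : Type*} [MetricSpace X] [NormedAddCommGroup V] [NormedSpace ℝ V]
  {ρ : Set (X × V) → Set (X × V)}

theorem isBundle_iterate (hρ : IsGlaeserOperation ρ) {E : Set (X × V)} (hE : IsBundle E) :
    ∀ k, IsBundle (ρ^[k] E)
  | 0 => hE
  | k + 1 => by
    rw [Function.iterate_succ_apply']
    exact hρ.bundle _ (hρ.isBundle_iterate hE k)

theorem iterate_subset_iterate_succ (hρ : IsGlaeserOperation ρ) {E : Set (X × V)}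
    (hE : IsBundle E) (k : ℕ) : ρ^[k] E ⊆ ρ^[k + 1] E := by
  rw [Function.iterate_succ_apply']
  exact subset_closure.trans (hρ.closure_subset _ (hρ.isBundle_iterate hE k))

theorem eventually_fibreDim_iterate_le [FiniteDimensional ℝ V] (hρ : IsGlaeserOperation ρ)
    {E : Set (X × V)} (hE : IsBundle E) (k : ℕ) (x : X) :
    ∀ᶠ y in 𝓝 x, fibreDim (ρ^[k] E) y ≤ fibreDim (ρ^[k + 1] E) x := by
  have hF := hρ.isBundle_iterate hE k
  rw [Function.iterate_succ_apply']
  exact (hF.eventually_fibreDim_le_closure x).mono fun _ hy =>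
    hy.trans (fibreDim_mono (hρ.closure_subset _ hF) x)

theorem fibre_iterate_add_eq_of_eventually (hρ : IsGlaeserOperation ρ) {E : Set (X × V)}
    (hE : IsBundle E) {k : ℕ} {x : X}
    (h : ∀ᶠ y in 𝓝 x, fibre (ρ^[k + 1] E) y = fibre (ρ^[k] E) y) (j : ℕ) :
    fibre (ρ^[k + j] E) x = fibre (ρ^[k] E) x := by
  obtain ⟨U, hU, hUo, hxU⟩ := eventually_nhds_iff.mp h
  suffices ∀ j, ∀ y ∈ U, fibre (ρ^[k + j] E) y = fibre (ρ^[k] E) y from this j x hxU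
  intro j
  induction j with
  | zero => exact fun _ _ => rfl
  | succ j ih =>
    intro y hy
    have hloc := hρ.isLocal _ _ (hρ.isBundle_iterate hE (k + j)) (hρ.isBundle_iterate hE k)
      U hUo ih y hy
    rw [← add_assoc, Function.iterate_succ_apply', ← hU y hy, Function.iterate_succ_apply']
    exact hloc

theorem fibre_iterate_stable [FiniteDimensional ℝ V] (hρ : IsGlaeserOperation ρ)
    {E : Set (X × V)} (hE : IsBundle E) (m : ℕ) {x : X}
    (hx : fibreDim (ρ^[2 * m + 2] E) x ≤ m) (j : ℕ) :
    fibre (ρ^[2 * m + j] E) x = fibre (ρ^[2 * m] E) x := by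
  induction m generalizing x j with
  | zero =>
    refine hρ.fibre_iterate_add_eq_of_eventually hE ?_ j
    filter_upwards [hρ.eventually_fibreDim_iterate_le hE 1 x] with y hy
    have hy0 : fibreDim (ρ^[1] E) y ≤ 0 := hy.trans hx
    exact ((hρ.isBundle_iterate hE 0).fibre_eq_of_subset_of_fibreDim_le
      (hρ.isBundle_iterate hE 1) (hρ.iterate_subset_iterate_succ hE 0) (by omega)).symm
  | succ m ih =>
    refine hρ.fibre_iterate_add_eq_of_eventually hE ?_ j
    filter_upwards [hρ.eventually_fibreDim_iterate_le hE (2 * m + 3) x] with y hy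
    have hy' : fibreDim (ρ^[2 * m + 3] E) y ≤ m + 1 := hy.trans hx
    by_cases hdim : fibreDim (ρ^[2 * m + 3] E) y ≤ fibreDim (ρ^[2 * m + 2] E) y
    · exact ((hρ.isBundle_iterate hE _).fibre_eq_of_subset_of_fibreDim_le
        (hρ.isBundle_iterate hE _) (hρ.iterate_subset_iterate_succ hE _) hdim).symm
    · have hstable := ih (x := y) (by omega)
      exact (hstable 3).trans (hstable 2).symm

end IsGlaeserOperation

/-- The fibre dimension of the saturation `Ê = ρ^[2r] E` is upper-semicontinuous. -/
theorem glaeser_saturation_dim_upperSemicontinuous {X V : Type*} [MetricSpace X]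
    [NormedAddCommGroup V] [NormedSpace ℝ V] [FiniteDimensional ℝ V] {r : ℕ}
    (hr : Module.finrank ℝ V = r) (ρ : Set (X × V) → Set (X × V))
    (hρ : IsGlaeserOperation ρ) (E : Set (X × V)) (hE : IsBundle E) :
    ∀ a : X, ∃ δ > (0 : ℝ), ∀ x : X, dist x a < δ →
      Module.finrank ℝ (Submodule.span ℝ {v : V | (x, v) ∈ ρ^[2 * r] E}) ≤
        Module.finrank ℝ (Submodule.span ℝ {v : V | (a, v) ∈ ρ^[2 * r] E}) := by
  intro a
  have hstable := hρ.fibre_iterate_stable hE r (x := a) (hr ▸ Submodule.finrank_le _) 1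
  obtain ⟨δ, hδ, hnear⟩ :=
    Metric.eventually_nhds_iff.mp (hρ.eventually_fibreDim_iterate_le hE (2 * r) a)
  refine ⟨δ, hδ, fun x hx => (hnear hx).trans_eq ?_⟩
  rw [fibreDim, hstable]
  rfl
end

section
/- Let X be a closed subset of ℝⁿ and a ∈ X. If s ≥ s_X(a,p), then T^p_a I^s(X) ⊆ T^p_a F_a(X), where F_a(X) is the formal local ideal of X at a. -/
set_option linter.unusedVariables false
open Filter Topology

/-- The space `P_p(ℝⁿ)` of polynomial functions of degree at most `p` on `ℝⁿ`,
realized as a submodule of the space of all functions `ℝⁿ → ℝ`. -/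
noncomputable def polyFun (n p : ℕ) : Submodule ℝ ((Fin n → ℝ) → ℝ) where
  carrier := {f | ∃ P : MvPolynomial (Fin n) ℝ, P.totalDegree ≤ p ∧
    f = fun x => MvPolynomial.eval x P}
  zero_mem' := ⟨0, by simp, by funext x; simp⟩
  add_mem' := by
    rintro f g ⟨P, hP, rfl⟩ ⟨Q, hQ, rfl⟩
    exact ⟨P + Q, le_trans (MvPolynomial.totalDegree_add P Q) (max_le hP hQ),
      by funext x; simp⟩
  smul_mem' := by
    rintro c f ⟨P, hP, rfl⟩
    refine ⟨MvPolynomial.C c * P, le_trans (MvPolynomial.totalDegree_mul _ _) ?_,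
      by funext x; simp⟩
    simpa [MvPolynomial.totalDegree_C] using hP

/-- `P_p(ℝⁿ)` as a type (with the topology induced from pointwise convergence,
which is the canonical topology on this finite-dimensional space). -/
abbrev Pp (n p : ℕ) : Type := ↥(polyFun n p)

/-- The dual space `P_p(ℝⁿ)*`, with its (weak-*) topology; since `P_p` is
finite dimensional, this is the canonical topology on the dual. -/
abbrev PpD (n p : ℕ) : Type := WeakDual ℝ (Pp n p)

/-- The evaluation functional `δ_a ∈ P_p*`, `δ_a(P) = P(a)`. -/
noncomputable def deltaF (n p : ℕ) (a : Fin n → ℝ) : PpD n p :=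
  ⟨{ toFun := fun f => (f : (Fin n → ℝ) → ℝ) a,
     map_add' := fun f g => rfl,
     map_smul' := fun c f => rfl },
   (continuous_apply a).comp continuous_subtype_val⟩

/-- The function `x ↦ (x-b)^α / α!` on `ℝⁿ`. -/
noncomputable def monF (n : ℕ) (b : Fin n → ℝ) (α : Fin n → ℕ) : (Fin n → ℝ) → ℝ :=
  fun x => (∏ i, ((α i).factorial : ℝ))⁻¹ * ∏ i, (x i - b i) ^ α i

theorem monF_mem (n p : ℕ) (b : Fin n → ℝ) (α : Fin n → ℕ) (hα : ∑ i, α i ≤ p) :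
    monF n b α ∈ polyFun n p := by
  refine ⟨MvPolynomial.C (∏ i, ((α i).factorial : ℝ))⁻¹ *
    ∏ i, (MvPolynomial.X i - MvPolynomial.C (b i)) ^ α i, ?_, ?_⟩
  · refine le_trans (MvPolynomial.totalDegree_mul _ _) ?_
    rw [MvPolynomial.totalDegree_C]
    rw [zero_add]
    refine le_trans (MvPolynomial.totalDegree_finset_prod _ _) (le_trans
      (Finset.sum_le_sum fun i _ => ?_) hα)
    refine le_trans (MvPolynomial.totalDegree_pow _ _) ?_
    have h1 : (MvPolynomial.X i - MvPolynomial.C (b i) : MvPolynomial (Fin n) ℝ).totalDegree ≤ 1 := by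
      rw [sub_eq_add_neg]
      refine le_trans (MvPolynomial.totalDegree_add _ _) ?_
      simp [MvPolynomial.totalDegree_X, MvPolynomial.totalDegree_neg,
        MvPolynomial.totalDegree_C]
    calc α i * (MvPolynomial.X i - MvPolynomial.C (b i) :
        MvPolynomial (Fin n) ℝ).totalDegree ≤ α i * 1 := Nat.mul_le_mul_left _ h1
      _ = α i := mul_one _
  · funext x
    simp [monF, MvPolynomial.eval_prod]

/-- The monomial `(x-b)^α / α!` as an element of `P_p` (junk value `0` if `|α| > p`). -/
noncomputable def mon (n p : ℕ) (b : Fin n → ℝ) (α : Fin n → ℕ) : Pp n p :=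
  if h : ∑ i, α i ≤ p then ⟨monF n b α, monF_mem n p b α h⟩ else 0

/-- The finite set of multiindices `α ∈ ℕⁿ` with `|α| ≤ p`. -/
noncomputable def degSet (n p : ℕ) : Finset (Fin n → ℕ) :=
  (Fintype.piFinset fun _ : Fin n => Finset.range (p + 1)).filter fun α => ∑ i, α i ≤ p

/-- The polynomial `T^p_a F(x) = Σ_{|α| ≤ p} F^α(a) (x-a)^α / α!` attached to a family
`F = (F^α)` of functions. -/
noncomputable def tfield (n p : ℕ) (F : (Fin n → ℕ) → (Fin n → ℝ) → ℝ)
    (a : Fin n → ℝ) : Pp n p :=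
  ∑ α ∈ degSet n p, F α a • mon n p a α

/-- The Whitney remainder `(R^p_a F)^α (b) = F^α(b) - Σ_{|β| ≤ p-|α|} F^{α+β}(a)(b-a)^β/β!`. -/
noncomputable def rem (n p : ℕ) (F : (Fin n → ℕ) → (Fin n → ℝ) → ℝ)
    (a b : Fin n → ℝ) (α : Fin n → ℕ) : ℝ :=
  F α b - ∑ β ∈ degSet n (p - ∑ i, α i),
    F (α + β) a * (∏ i, (b i - a i) ^ β i) / (∏ i, ((β i).factorial : ℝ))

/-- `F = (F^α)_{|α| ≤ p}` is a `C^p` Whitney field on `X`: the rescaled remainders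
`δ_α(a,b) = (R^p_a F)^α(b) / |b-a|^{p-|α|}` tend to `0` as `|a-b| → 0`, `a, b ∈ X`. -/
def IsWhitneyField (n p : ℕ) (F : (Fin n → ℕ) → (Fin n → ℝ) → ℝ)
    (X : Set (Fin n → ℝ)) : Prop :=
  ∀ α : Fin n → ℕ, ∑ i, α i ≤ p → ∀ ε > (0 : ℝ), ∃ δ > (0 : ℝ),
    ∀ a ∈ X, ∀ b ∈ X, a ≠ b → ‖b - a‖ < δ →
      |rem n p F a b α| ≤ ε * ‖b - a‖ ^ (p - ∑ i, α i)

/-- The set `ΔE` of (4.9): sums `ξ + η` of functionals from two fibres of `E`,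
subject to the bound `|a-b|^{p-|α|} |η((x-b)^α/α!)| ≤ 1`. -/
noncomputable def deltaSet (n p : ℕ) (E : Set ((Fin n → ℝ) × PpD n p)) :
    Set ((Fin n → ℝ) × (Fin n → ℝ) × PpD n p) :=
  {q | ∃ a b ξ η, (a, ξ) ∈ E ∧ (b, η) ∈ E ∧
    (∀ α : Fin n → ℕ, ∑ i, α i ≤ p →
      ‖a - b‖ ^ (p - ∑ i, α i) * |η (mon n p b α)| ≤ 1) ∧
    q = (a, b, ξ + η)}

/-- The Glaeser operation (4.10)-(4.11): `ρ(E)_a` is the span of the diagonal trace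
of the closure of `ΔE`. -/
noncomputable def rhoOp (n p : ℕ) (X : Set (Fin n → ℝ))
    (E : Set ((Fin n → ℝ) × PpD n p)) : Set ((Fin n → ℝ) × PpD n p) :=
  {q | q.1 ∈ X ∧ q.2 ∈ Submodule.span ℝ
    {ξ : PpD n p | (q.1, q.1, ξ) ∈ closure (deltaSet n p E)}}

/-- The initial bundle `{(a, λδ_a) : a ∈ X, λ ∈ ℝ}`. -/
noncomputable def e0 (n p : ℕ) (X : Set (Fin n → ℝ)) : Set ((Fin n → ℝ) × PpD n p) :=
  {q | q.1 ∈ X ∧ ∃ c : ℝ, q.2 = c • deltaF n p q.1}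

/-- The paratangent bundle of order `p` of `X` (Definition 4.12): the Glaeser
saturation (stable iterate, reached after `2·dim` steps) of the delta bundle. -/
noncomputable def tau (n p : ℕ) (X : Set (Fin n → ℝ)) : Set ((Fin n → ℝ) × PpD n p) :=
  (rhoOp n p X)^[2 * Module.finrank ℝ (PpD n p)] (e0 n p X)

/-- `ΔΦ` of (4.14), for bundles of subspaces of `P_p* × ℝ`. -/
noncomputable def deltaSetF (n p : ℕ) (Φ : Set ((Fin n → ℝ) × (PpD n p × ℝ))) :
    Set ((Fin n → ℝ) × (Fin n → ℝ) × (PpD n p × ℝ)) :=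
  {q | ∃ a b ξ η, (a, ξ) ∈ Φ ∧ (b, η) ∈ Φ ∧
    (∀ α : Fin n → ℕ, ∑ i, α i ≤ p →
      ‖a - b‖ ^ (p - ∑ i, α i) * |η.1 (mon n p b α)| ≤ 1) ∧
    q = (a, b, ξ + η)}

/-- The Glaeser operation (4.15) on bundles of subspaces of `P_p* × ℝ`. -/
noncomputable def rhoOpF (n p : ℕ) (X : Set (Fin n → ℝ))
    (Φ : Set ((Fin n → ℝ) × (PpD n p × ℝ))) : Set ((Fin n → ℝ) × (PpD n p × ℝ)) :=
  {q | q.1 ∈ X ∧ q.2 ∈ Submodule.span ℝ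
    {v : PpD n p × ℝ | (q.1, q.1, v) ∈ closure (deltaSetF n p Φ)}}

/-- The initial bundle `{(a, (λδ_a, λ f(a))) : a ∈ X, λ ∈ ℝ}`. -/
noncomputable def phi0 (n p : ℕ) (f : (Fin n → ℝ) → ℝ) (X : Set (Fin n → ℝ)) :
    Set ((Fin n → ℝ) × (PpD n p × ℝ)) :=
  {q | q.1 ∈ X ∧ ∃ c : ℝ, q.2 = (c • deltaF n p q.1, c * f q.1)}

/-- `∇^p f` (Definition 4.16): the Glaeser saturation of `{(a, λδ_a, λ f(a))}`. -/
noncomputable def nabla (n p : ℕ) (f : (Fin n → ℝ) → ℝ) (X : Set (Fin n → ℝ)) :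
    Set ((Fin n → ℝ) × (PpD n p × ℝ)) :=
  (rhoOpF n p X)^[2 * Module.finrank ℝ (PpD n p × ℝ)] (phi0 n p f X)

/-- `Φ` is the graph of a function `T → ℝ`: `Φ ⊆ T × ℝ` and over each point of `T`
there is exactly one value. -/
def IsGraphOn (n p : ℕ) (Φ : Set ((Fin n → ℝ) × (PpD n p × ℝ)))
    (T : Set ((Fin n → ℝ) × PpD n p)) : Prop :=
  (∀ a ξ c, (a, (ξ, c)) ∈ Φ → (a, ξ) ∈ T) ∧
  ∀ a ξ, (a, ξ) ∈ T → ∃! c : ℝ, (a, (ξ, c)) ∈ Φ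

/-- Partial derivative `∂/∂x_i` of a function on `ℝⁿ`. -/
noncomputable def pder (n : ℕ) (i : Fin n) (h : (Fin n → ℝ) → ℝ) : (Fin n → ℝ) → ℝ :=
  fun a => fderiv ℝ h a (Pi.single i 1)

/-- Iterated partial derivative `(∂/∂x_i)^k`. -/
noncomputable def pderPow (n : ℕ) (i : Fin n) : ℕ → ((Fin n → ℝ) → ℝ) → ((Fin n → ℝ) → ℝ)
  | 0 => id
  | k + 1 => fun h => pder n i (pderPow n i k h)

/-- Multi-index partial derivative `D^α = ∏_i (∂/∂x_i)^{α_i}`. -/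
noncomputable def dAlpha (n : ℕ) (α : Fin n → ℕ) (h : (Fin n → ℝ) → ℝ) :
    (Fin n → ℝ) → ℝ :=
  (List.finRange n).foldr (fun i g => pderPow n i (α i) g) h

/-- The Taylor polynomial of order `p` of `h` at `a`, as an element of `P_p`. -/
noncomputable def taylorPoly (n p : ℕ) (h : (Fin n → ℝ) → ℝ) (a : Fin n → ℝ) : Pp n p :=
  ∑ α ∈ degSet n p, dAlpha n α h a • mon n p a α

/-- The truncation at order `p` of the formal power series `Σ_α c_α (x-a)^α`,
as an element of `P_p`. -/
noncomputable def truncSeries (n p : ℕ) (c : (Fin n → ℕ) → ℝ) (a : Fin n → ℝ) : Pp n p :=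
  ∑ α ∈ degSet n p, (c α * ∏ i, ((α i).factorial : ℝ)) • mon n p a α

/-- The formal local ideal `F_a(X)`: formal power series (centered at `a`, given by
their coefficients) all of whose truncations `T^p_a F(x)` are `o(|x-a|^p)` on `X`. -/
def formalIdeal (n : ℕ) (X : Set (Fin n → ℝ)) (a : Fin n → ℝ) :
    Set ((Fin n → ℕ) → ℝ) :=
  {c | ∀ p : ℕ, ∀ ε > (0 : ℝ), ∃ δ > (0 : ℝ), ∀ x ∈ X, ‖x - a‖ < δ →
    |(truncSeries n p c a : (Fin n → ℝ) → ℝ) x| ≤ ε * ‖x - a‖ ^ p}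

/-- `T^p_a I^q(X)`: Taylor polynomials of order `p` at `a` of `C^q` functions
vanishing on `X`. -/
def tIdeal (n q p : ℕ) (X : Set (Fin n → ℝ)) (a : Fin n → ℝ) : Set (Pp n p) :=
  {Q | ∃ h : (Fin n → ℝ) → ℝ, ContDiff ℝ q h ∧ (∀ x ∈ X, h x = 0) ∧
    Q = taylorPoly n p h a}

/-- The pullback `φ*_b : P_p(ℝⁿ) → P_p(ℝᵐ)`, `P ↦ T^p_b (P ∘ φ)`. -/
noncomputable def pullPoly (n m p : ℕ) (φ : (Fin m → ℝ) → (Fin n → ℝ))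
    (b : Fin m → ℝ) (P : Pp n p) : Pp m p :=
  taylorPoly m p (fun y => (P : (Fin n → ℝ) → ℝ) (φ y)) b


/-!
For each order `q` the spaces `T^q_a I^t(X)` decrease in `t` inside the finite-dimensional
space `P_q`, so they are constant from some index `σ q` on. Starting from `h₀ ∈ I^s(X)` with
`T^p_a h₀ = Q`, this stability lets us choose inductively `h_{k+1} ∈ I^{σ(p+k+1)}(X)` with the
same jet of order `p + k` at `a` as `h_k`. These jets fit together into a formal series `c` whose
truncation of order `q` is the Taylor polynomial of a `C^q` function `h` vanishing on `X`; on `X`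
it therefore equals `-(h - T^q_a h)`, which is `o(|x - a|^q)` by Taylor's theorem. The latter
follows by induction on `q` from `∂ᵢ T^{q+1}_a h = T^q_a ∂ᵢ h` and the mean value inequality.
-/

theorem exists_seq_of_forall_exists_succ {α : Type*} (P : ℕ → α → Prop) (R : ℕ → α → α → Prop)
    {x₀ : α} (h₀ : P 0 x₀) (step : ∀ k x, P k x → ∃ y, P (k + 1) y ∧ R k x y) :
    ∃ f : ℕ → α, f 0 = x₀ ∧ ∀ k, P k (f k) ∧ R k (f k) (f (k + 1)) := by
  choose g hgP hgR using step
  let f : (k : ℕ) → {x // P k x} :=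
    Nat.rec ⟨x₀, h₀⟩ fun k x => ⟨g k x x.2, hgP k x x.2⟩
  exact ⟨fun k => (f k).1, rfl, fun k => ⟨(f k).2, hgR k (f k).1 (f k).2⟩⟩

theorem ContinuousLinearMap.opNorm_le_sum_norm_apply_single {𝕜 ι F : Type*}
    [NontriviallyNormedField 𝕜] [Fintype ι] [DecidableEq ι] [SeminormedAddCommGroup F]
    [NormedSpace 𝕜 F] (L : (ι → 𝕜) →L[𝕜] F) :
    ‖L‖ ≤ ∑ i, ‖L (Pi.single i 1)‖ := by
  refine L.opNorm_le_bound (by positivity) fun v => ?_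
  have hv : L v = ∑ i, v i • L (Pi.single i 1) := by
    conv_lhs => rw [← Finset.univ_sum_single v]
    simp only [map_sum, ← map_smul, ← Pi.single_smul, smul_eq_mul, mul_one]
  calc ‖L v‖ ≤ ∑ i, ‖v i‖ * ‖L (Pi.single i 1)‖ := by
        rw [hv]; exact (norm_sum_le _ _).trans_eq (by simp only [norm_smul])
    _ ≤ ∑ i, ‖v‖ * ‖L (Pi.single i 1)‖ := by
        gcongr with i; exact norm_le_pi_norm v i
    _ = (∑ i, ‖L (Pi.single i 1)‖) * ‖v‖ := by rw [← Finset.mul_sum, mul_comm]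

open Asymptotics in
theorem isLittleO_pow_succ_of_fderiv {E F : Type*} [NormedAddCommGroup E] [NormedSpace ℝ E]
    [NormedAddCommGroup F] [NormedSpace ℝ F] {f : E → F} {a : E} {q : ℕ}
    (hf : ∀ᶠ x in 𝓝 a, DifferentiableAt ℝ f x) (hfa : f a = 0)
    (hf' : fderiv ℝ f =o[𝓝 a] fun x => ‖x - a‖ ^ q) :
    f =o[𝓝 a] fun x => ‖x - a‖ ^ (q + 1) := by
  refine IsLittleO.of_bound fun c hc => ?_
  obtain ⟨δ, hδ, hball⟩ := Metric.eventually_nhds_iff.mp (hf.and (hf'.def hc))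
  refine Metric.eventually_nhds_iff.mpr ⟨δ, hδ, fun x hx => ?_⟩
  have hsub : Metric.closedBall a ‖x - a‖ ⊆ Metric.ball a δ :=
    Metric.closedBall_subset_ball (by rwa [← dist_eq_norm])
  have hbound : ∀ y ∈ Metric.closedBall a ‖x - a‖, ‖fderiv ℝ f y‖ ≤ c * ‖x - a‖ ^ q := by
    intro y hy
    calc ‖fderiv ℝ f y‖ ≤ c * ‖‖y - a‖ ^ q‖ := (hball (hsub hy)).2
      _ ≤ c * ‖x - a‖ ^ q := by
          rw [Metric.mem_closedBall, dist_eq_norm] at hy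
          rw [norm_pow, norm_norm]; gcongr
  have hmvt := (convex_closedBall a ‖x - a‖).norm_image_sub_le_of_norm_fderiv_le
    (fun y hy => (hball (hsub hy)).1) hbound (Metric.mem_closedBall_self (norm_nonneg _))
    (by simp [dist_eq_norm] : x ∈ Metric.closedBall a ‖x - a‖)
  rw [hfa, sub_zero] at hmvt
  rw [norm_pow, norm_norm, pow_succ, ← mul_assoc]
  exact hmvt

section PartialDerivatives

variable {n : ℕ}

noncomputable def pderList (l : List (Fin n)) (h : (Fin n → ℝ) → ℝ) : (Fin n → ℝ) → ℝ :=
  l.foldr (pder n) h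

def coordList (α : Fin n → ℕ) : List (Fin n) :=
  (List.finRange n).flatMap fun i => List.replicate (α i) i

@[simp]
lemma pderList_nil (h : (Fin n → ℝ) → ℝ) : pderList [] h = h := rfl

@[simp]
lemma pderList_cons (i : Fin n) (l : List (Fin n)) (h : (Fin n → ℝ) → ℝ) :
    pderList (i :: l) h = pder n i (pderList l h) := rfl

lemma pderList_append (l₁ l₂ : List (Fin n)) (h : (Fin n → ℝ) → ℝ) :
    pderList (l₁ ++ l₂) h = pderList l₁ (pderList l₂ h) :=
  List.foldr_append

lemma pderPow_eq_pderList (i : Fin n) (k : ℕ) (h : (Fin n → ℝ) → ℝ) :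
    pderPow n i k h = pderList (List.replicate k i) h := by
  induction k with
  | zero => rfl
  | succ k ih => rw [List.replicate_succ, pderList_cons, ← ih]; rfl

lemma dAlpha_eq_pderList (α : Fin n → ℕ) (h : (Fin n → ℝ) → ℝ) :
    dAlpha n α h = pderList (coordList α) h := by
  unfold dAlpha coordList
  induction List.finRange n with
  | nil => rfl
  | cons i l ih =>
    rw [List.foldr_cons, List.flatMap_cons, pderList_append, ← ih, pderPow_eq_pderList]

lemma count_coordList (α : Fin n → ℕ) (j : Fin n) : (coordList α).count j = α j := by
  simp [coordList, List.count_flatMap, List.count_replicate, ← Fin.sum_univ_def]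

lemma length_coordList (α : Fin n → ℕ) : (coordList α).length = ∑ i, α i := by
  simp [coordList, List.length_flatMap, ← Fin.sum_univ_def]

lemma contDiff_pder {m : ℕ} {h : (Fin n → ℝ) → ℝ} (i : Fin n) (H : ContDiff ℝ (m + 1 : ℕ) h) :
    ContDiff ℝ m (pder n i h) :=
  (H.fderiv_right (by norm_cast)).clm_apply contDiff_const

lemma contDiff_pderList {m : ℕ} {l : List (Fin n)} {h : (Fin n → ℝ) → ℝ}
    (H : ContDiff ℝ (m + l.length : ℕ) h) : ContDiff ℝ m (pderList l h) := by
  induction l generalizing m with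
  | nil => simpa using H
  | cons i l ih =>
    exact contDiff_pder i (ih (by rwa [List.length_cons, ← add_assoc, add_right_comm] at H))

lemma pder_add {h₁ h₂ : (Fin n → ℝ) → ℝ} (H₁ : Differentiable ℝ h₁) (H₂ : Differentiable ℝ h₂)
    (i : Fin n) : pder n i (h₁ + h₂) = pder n i h₁ + pder n i h₂ := by
  funext x
  simp [pder, fderiv_add (H₁ x) (H₂ x)]

lemma pder_smul (c : ℝ) (h : (Fin n → ℝ) → ℝ) (i : Fin n) :
    pder n i (c • h) = c • pder n i h := by
  funext x
  simp [pder, fderiv_const_smul_field]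

lemma pderList_smul (l : List (Fin n)) (c : ℝ) (h : (Fin n → ℝ) → ℝ) :
    pderList l (c • h) = c • pderList l h := by
  induction l with
  | nil => rfl
  | cons i l ih => rw [pderList_cons, ih, pder_smul]; rfl

lemma pderList_zero (l : List (Fin n)) : pderList l 0 = 0 := by
  simpa using pderList_smul l 0 0

lemma pderList_add (l : List (Fin n)) {h₁ h₂ : (Fin n → ℝ) → ℝ}
    (H₁ : ContDiff ℝ l.length h₁) (H₂ : ContDiff ℝ l.length h₂) :
    pderList l (h₁ + h₂) = pderList l h₁ + pderList l h₂ := by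
  induction l with
  | nil => rfl
  | cons i l ih =>
    have hle : (l.length : WithTop ℕ∞) ≤ (i :: l).length := by simp
    have hdiff : ∀ {h : (Fin n → ℝ) → ℝ}, ContDiff ℝ (i :: l).length h →
        Differentiable ℝ (pderList l h) := fun H =>
      (contDiff_pderList (m := 1) (by simpa [add_comm] using H)).differentiable one_ne_zero
    rw [pderList_cons, ih (H₁.of_le hle) (H₂.of_le hle), pder_add (hdiff H₁) (hdiff H₂)]
    rfl

lemma pderList_sum (l : List (Fin n)) {ι : Type*} (s : Finset ι) (f : ι → (Fin n → ℝ) → ℝ)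
    (H : ∀ j ∈ s, ContDiff ℝ l.length (f j)) :
    pderList l (∑ j ∈ s, f j) = ∑ j ∈ s, pderList l (f j) := by
  induction s using Finset.cons_induction with
  | empty => simp [pderList_zero]
  | cons j s hj ih =>
    rw [Finset.forall_mem_cons] at H
    have hsum := ContDiff.sum H.2
    rw [← Finset.sum_fn] at hsum
    rw [Finset.sum_cons, Finset.sum_cons, pderList_add l H.1 hsum, ih H.2]

lemma dAlpha_smul (α : Fin n → ℕ) (c : ℝ) (h : (Fin n → ℝ) → ℝ) :
    dAlpha n α (c • h) = c • dAlpha n α h := by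
  simp only [dAlpha_eq_pderList, pderList_smul]

lemma dAlpha_add {α : Fin n → ℕ} {h₁ h₂ : (Fin n → ℝ) → ℝ} (H₁ : ContDiff ℝ (∑ i, α i : ℕ) h₁)
    (H₂ : ContDiff ℝ (∑ i, α i : ℕ) h₂) : dAlpha n α (h₁ + h₂) = dAlpha n α h₁ + dAlpha n α h₂ := by
  simp only [dAlpha_eq_pderList]
  rw [← length_coordList] at H₁ H₂
  exact pderList_add _ H₁ H₂

lemma pder_comm {g : (Fin n → ℝ) → ℝ} (H : ContDiff ℝ 2 g) (i j : Fin n) :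
    pder n i (pder n j g) = pder n j (pder n i g) := by
  funext x
  have hdiff : Differentiable ℝ (fderiv ℝ g) :=
    (H.fderiv_right (m := 1) (by norm_num)).differentiable one_ne_zero
  have hsecond : ∀ k l : Fin n, pder n k (pder n l g) x =
      fderiv ℝ (fderiv ℝ g) x (Pi.single k 1) (Pi.single l 1) := fun k l => by
    change fderiv ℝ (fun y => fderiv ℝ g y (Pi.single l 1)) x (Pi.single k 1) = _
    simp [fderiv_clm_apply (hdiff x) (differentiableAt_const _)]
  rw [hsecond, hsecond]
  exact H.contDiffAt.isSymmSndFDerivAt (by simp) _ _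

lemma pderList_perm {l l' : List (Fin n)} (hl : l.Perm l') {g : (Fin n → ℝ) → ℝ}
    (H : ContDiff ℝ l.length g) : pderList l g = pderList l' g := by
  induction hl with
  | nil => rfl
  | cons i _ ih =>
    rw [pderList_cons, pderList_cons, ih (H.of_le (by simp))]
  | swap i j l =>
    refine pder_comm (contDiff_pderList ?_) j i
    convert H using 2
    simp only [List.length_cons]; ring
  | trans h₁₂ _ ih₁₂ ih₂₃ => rw [ih₁₂ H, ih₂₃ (h₁₂.length_eq ▸ H)]

lemma dAlpha_add_single {β : Fin n → ℕ} {g : (Fin n → ℝ) → ℝ} (i : Fin n)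
    (H : ContDiff ℝ (∑ j, β j + 1 : ℕ) g) :
    dAlpha n (β + Pi.single i 1) g = dAlpha n β (pder n i g) := by
  have hperm : (coordList (β + Pi.single i 1)).Perm (coordList β ++ [i]) := by
    rw [List.perm_iff_count]
    intro j
    simp only [List.count_append, count_coordList, List.count_singleton, Pi.add_apply,
      Pi.single_apply]
    by_cases hij : i = j <;> simp [hij, Ne.symm]
  rw [dAlpha_eq_pderList, dAlpha_eq_pderList, pderList_perm hperm, pderList_append]
  · rfl
  · simpa [length_coordList, Finset.sum_add_distrib] using H

end PartialDerivatives

section Monomials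

variable {n : ℕ}

lemma contDiff_of_mem_polyFun {p : ℕ} {f : (Fin n → ℝ) → ℝ} (hf : f ∈ polyFun n p)
    {m : WithTop ℕ∞} : ContDiff ℝ m f := by
  obtain ⟨P, -, rfl⟩ := hf
  exact (AnalyticOnNhd.eval_mvPolynomial P).contDiff

lemma contDiff_monF (b : Fin n → ℝ) (α : Fin n → ℕ) {m : WithTop ℕ∞} :
    ContDiff ℝ m (monF n b α) :=
  contDiff_of_mem_polyFun (monF_mem n _ b α le_rfl)

lemma contDiff_smul_monF (c : ℝ) (b : Fin n → ℝ) (α : Fin n → ℕ) {m : WithTop ℕ∞} :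
    ContDiff ℝ m (c • monF n b α) :=
  (contDiff_monF b α).const_smul c

lemma monF_eq_prod (b : Fin n → ℝ) (α : Fin n → ℕ) :
    monF n b α = fun x => ∏ j, (x j - b j) ^ α j / (α j).factorial := by
  funext x
  rw [monF, Finset.prod_div_distrib, div_eq_inv_mul]

lemma hasDerivAt_sub_pow_div_factorial (b t : ℝ) (k : ℕ) :
    HasDerivAt (fun t => (t - b) ^ k / k.factorial)
      (if k = 0 then 0 else (t - b) ^ (k - 1) / (k - 1).factorial) t := by
  cases k with
  | zero => simpa using hasDerivAt_const t (1 : ℝ)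
  | succ k =>
    refine ((((hasDerivAt_id' t).sub_const b).pow (k + 1)).div_const
      ((k + 1).factorial : ℝ)).congr_deriv ?_
    rw [if_neg k.succ_ne_zero, Nat.add_sub_cancel, Nat.factorial_succ]
    push_cast
    field_simp

lemma pder_monF (b : Fin n → ℝ) (α : Fin n → ℕ) (i : Fin n) :
    pder n i (monF n b α) = if α i = 0 then 0 else monF n b (α - Pi.single i 1) := by
  funext x
  set d : Fin n → ℝ := fun j =>
    if α j = 0 then 0 else (x j - b j) ^ (α j - 1) / (α j - 1).factorial
  have hfactor : ∀ j, HasFDerivAt (fun x : Fin n → ℝ => (x j - b j) ^ α j / (α j).factorial)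
      (d j • ContinuousLinearMap.proj j) x := fun j =>
    (hasDerivAt_sub_pow_div_factorial (b j) (x j) (α j)).comp_hasFDerivAt
      (f := fun x : Fin n → ℝ => x j) x (hasFDerivAt_apply (𝕜 := ℝ) j x)
  have hpder : pder n i (monF n b α) x =
      d i * ∏ j ∈ Finset.univ.erase i, (x j - b j) ^ α j / (α j).factorial := by
    rw [pder, monF_eq_prod, (HasFDerivAt.finsetProd fun j _ => hfactor j).fderiv]
    simp [Pi.single_apply, mul_comm]
  rw [hpder]
  by_cases hαi : α i = 0
  · simp [d, hαi]
  · rw [if_neg hαi, monF_eq_prod]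
    dsimp only
    rw [← Finset.mul_prod_erase _ _ (Finset.mem_univ i)]
    congr 1
    · simp [d, hαi]
    · refine Finset.prod_congr rfl fun j hj => ?_
      simp [Finset.ne_of_mem_erase hj]

lemma monF_apply_self (b : Fin n → ℝ) (α : Fin n → ℕ) :
    monF n b α b = if α = 0 then 1 else 0 := by
  split_ifs with hα
  · simp [monF, hα]
  · obtain ⟨i, hi⟩ := Function.ne_iff.mp hα
    simp only [monF, sub_self]
    rw [Finset.prod_eq_zero (f := fun j => (0 : ℝ) ^ α j) (Finset.mem_univ i) (zero_pow hi),
      mul_zero]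

lemma pderList_monF (l : List (Fin n)) (b : Fin n → ℝ) (α : Fin n → ℕ) :
    pderList l (monF n b α) =
      if ∀ j, l.count j ≤ α j then monF n b (α - fun j => l.count j) else 0 := by
  induction l with
  | nil => simp; rfl
  | cons i l ih =>
    have hcount : ∀ j, (i :: l).count j = l.count j + if i = j then 1 else 0 := fun j => by
      simp [List.count_cons]
    rw [pderList_cons, ih]
    by_cases hl : ∀ j, l.count j ≤ α j
    · rw [if_pos hl, pder_monF]
      by_cases hi : α i - l.count i = 0
      · rw [Pi.sub_apply, if_pos hi, if_neg fun h => by have := h i; simp [hcount] at this; omega]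
      · have hle : ∀ j, (i :: l).count j ≤ α j := fun j => by
          rw [hcount]
          by_cases hij : i = j
          · subst hij; simp only [if_true]; omega
          · simpa [hij] using hl j
        rw [Pi.sub_apply, if_neg hi, if_pos hle]
        congr 1
        funext j
        simp only [Pi.sub_apply, hcount, Pi.single_apply]
        split_ifs <;> omega
    · rw [if_neg hl, if_neg fun h => hl fun j => (h j).trans' (by simp [hcount])]
      exact pderList_zero [i]

lemma dAlpha_monF_apply_self (b : Fin n → ℝ) (α β : Fin n → ℕ) :
    dAlpha n β (monF n b α) b = if α = β then 1 else 0 := by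
  rw [dAlpha_eq_pderList, pderList_monF]
  simp only [count_coordList]
  by_cases hβα : ∀ j, β j ≤ α j
  · rw [if_pos hβα, monF_apply_self]
    refine if_congr ⟨fun h => funext fun j => ?_, fun h => by simp [h]⟩ rfl rfl
    have := congrFun h j
    have := hβα j
    simp only [Pi.sub_apply, Pi.zero_apply] at *
    omega
  · rw [if_neg hβα, if_neg (by rintro rfl; exact hβα fun j => le_rfl)]
    rfl

end Monomials

section TaylorPolynomial

variable {n : ℕ}

lemma mem_degSet {p : ℕ} {α : Fin n → ℕ} : α ∈ degSet n p ↔ ∑ i, α i ≤ p := by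
  refine Finset.mem_filter.trans ⟨And.right, fun h => ⟨Fintype.mem_piFinset.mpr fun i => ?_, h⟩⟩
  exact Finset.mem_range_succ_iff.mpr ((Finset.single_le_sum (by simp) (Finset.mem_univ i)).trans h)

lemma sum_add_single (β : Fin n → ℕ) (i : Fin n) :
    ∑ j, (β + Pi.single i 1 : Fin n → ℕ) j = ∑ j, β j + 1 := by
  simp [Finset.sum_add_distrib]

lemma coe_mon {p : ℕ} {a : Fin n → ℝ} {α : Fin n → ℕ} (h : ∑ i, α i ≤ p) :
    (mon n p a α : (Fin n → ℝ) → ℝ) = monF n a α := by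
  rw [mon, dif_pos h]

lemma coe_taylorPoly (p : ℕ) (h : (Fin n → ℝ) → ℝ) (a : Fin n → ℝ) :
    (taylorPoly n p h a : (Fin n → ℝ) → ℝ) = ∑ α ∈ degSet n p, dAlpha n α h a • monF n a α := by
  rw [taylorPoly, Submodule.coe_sum]
  refine Finset.sum_congr rfl fun α hα => ?_
  rw [Submodule.coe_smul, coe_mon (mem_degSet.mp hα)]

lemma dAlpha_zero (h : (Fin n → ℝ) → ℝ) : dAlpha n 0 h = h := by
  have : coordList (0 : Fin n → ℕ) = [] := List.length_eq_zero_iff.mp (by simp [length_coordList])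
  rw [dAlpha_eq_pderList, this]
  rfl

lemma dAlpha_taylorPoly_apply_self {p : ℕ} {h : (Fin n → ℝ) → ℝ} {a : Fin n → ℝ}
    {β : Fin n → ℕ} (hβ : ∑ i, β i ≤ p) :
    dAlpha n β (taylorPoly n p h a) a = dAlpha n β h a := by
  rw [coe_taylorPoly, dAlpha_eq_pderList, pderList_sum _ _ (fun α => dAlpha n α h a • monF n a α)
    fun α _ => contDiff_smul_monF _ a α]
  simp only [pderList_smul, ← dAlpha_eq_pderList, Finset.sum_apply, Pi.smul_apply,
    dAlpha_monF_apply_self, smul_eq_mul, mul_ite, mul_one, mul_zero]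
  rw [Finset.sum_ite_eq' _ _ _, if_pos (mem_degSet.mpr hβ)]

lemma taylorPoly_apply_self (p : ℕ) (h : (Fin n → ℝ) → ℝ) (a : Fin n → ℝ) :
    (taylorPoly n p h a : (Fin n → ℝ) → ℝ) a = h a := by
  simpa [dAlpha_zero] using dAlpha_taylorPoly_apply_self (p := p) (h := h) (a := a) (β := 0)
    (by simp)

lemma dAlpha_apply_eq_of_taylorPoly_eq {p : ℕ} {g h : (Fin n → ℝ) → ℝ} {a : Fin n → ℝ}
    (hgh : taylorPoly n p g a = taylorPoly n p h a) {β : Fin n → ℕ} (hβ : ∑ i, β i ≤ p) :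
    dAlpha n β g a = dAlpha n β h a := by
  rw [← dAlpha_taylorPoly_apply_self hβ, hgh, dAlpha_taylorPoly_apply_self hβ]

lemma taylorPoly_add {p N : ℕ} (hpN : p ≤ N) {h₁ h₂ : (Fin n → ℝ) → ℝ}
    (H₁ : ContDiff ℝ N h₁) (H₂ : ContDiff ℝ N h₂) (a : Fin n → ℝ) :
    taylorPoly n p (h₁ + h₂) a = taylorPoly n p h₁ a + taylorPoly n p h₂ a := by
  rw [taylorPoly, taylorPoly, taylorPoly, ← Finset.sum_add_distrib]
  refine Finset.sum_congr rfl fun α hα => ?_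
  have hle : ((∑ i, α i : ℕ) : WithTop ℕ∞) ≤ N := by
    exact_mod_cast (mem_degSet.mp hα).trans hpN
  rw [← add_smul, dAlpha_add (H₁.of_le hle) (H₂.of_le hle)]
  rfl

lemma taylorPoly_smul (p : ℕ) (c : ℝ) (h : (Fin n → ℝ) → ℝ) (a : Fin n → ℝ) :
    taylorPoly n p (c • h) a = c • taylorPoly n p h a := by
  simp only [taylorPoly, Finset.smul_sum, smul_smul, dAlpha_smul]
  rfl

lemma pder_taylorPoly {q : ℕ} {h : (Fin n → ℝ) → ℝ} (H : ContDiff ℝ (q + 1 : ℕ) h)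
    (a : Fin n → ℝ) (i : Fin n) :
    pder n i (taylorPoly n (q + 1) h a) = taylorPoly n q (pder n i h) a := by
  change pderList [i] _ = _
  rw [coe_taylorPoly, coe_taylorPoly, pderList_sum _ _ (fun α => dAlpha n α h a • monF n a α)
    fun α _ => contDiff_smul_monF _ a α]
  simp only [pderList_smul, pderList_cons, pderList_nil, pder_monF, smul_ite, smul_zero]
  rw [Finset.sum_ite, Finset.sum_const_zero, zero_add]
  have hcancel : ∀ α : Fin n → ℕ, α i ≠ 0 → α - Pi.single i 1 + Pi.single i 1 = α :=
    fun α hα => funext fun j => by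
      by_cases hj : j = i
      · subst hj; simp; omega
      · simp [hj]
  have hsum : ∀ α : Fin n → ℕ, α i ≠ 0 → ∑ j, (α - Pi.single i 1 : Fin n → ℕ) j + 1 = ∑ j, α j :=
    fun α hα => by rw [← sum_add_single, hcancel α hα]
  refine Finset.sum_nbij' (· - Pi.single i 1) (· + Pi.single i 1) ?_ ?_ ?_ ?_ ?_
  · simp only [Finset.mem_filter, mem_degSet]
    rintro α ⟨hα, hαi⟩
    have := hsum α hαi
    omega
  · simp only [Finset.mem_filter, mem_degSet, sum_add_single]
    intro β hβ
    simpa using hβ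
  · simp only [Finset.mem_filter]
    exact fun α hα => hcancel α hα.2
  · simp
  · simp only [Finset.mem_filter, mem_degSet]
    rintro α ⟨hα, hαi⟩
    rw [← dAlpha_add_single i (H.of_le (by exact_mod_cast (hsum α hαi).trans_le (by omega))),
      hcancel α hαi]

end TaylorPolynomial

section TaylorTheorem

open Asymptotics

variable {n : ℕ}

lemma degSet_zero : degSet n 0 = {0} := by
  ext α
  simp [mem_degSet, funext_iff]

lemma coe_taylorPoly_zero (h : (Fin n → ℝ) → ℝ) (a : Fin n → ℝ) :
    (taylorPoly n 0 h a : (Fin n → ℝ) → ℝ) = fun _ => h a := by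
  funext x
  simp [coe_taylorPoly, degSet_zero, dAlpha_zero, monF]

lemma pder_sub {f g : (Fin n → ℝ) → ℝ} (hf : Differentiable ℝ f) (hg : Differentiable ℝ g)
    (i : Fin n) : pder n i (f - g) = pder n i f - pder n i g := by
  funext x
  simp [pder, fderiv_sub (hf x) (hg x)]

theorem isLittleO_sub_taylorPoly {q : ℕ} {h : (Fin n → ℝ) → ℝ} (H : ContDiff ℝ q h)
    (a : Fin n → ℝ) :
    (h - (taylorPoly n q h a : (Fin n → ℝ) → ℝ)) =o[𝓝 a] fun x => ‖x - a‖ ^ q := by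
  induction q generalizing h with
  | zero =>
    simp only [pow_zero]
    rw [coe_taylorPoly_zero, isLittleO_one_iff]
    simpa [Pi.sub_def] using (H.continuous.tendsto a).sub_const (h a)
  | succ q ih =>
    have hT : Differentiable ℝ (taylorPoly n (q + 1) h a : (Fin n → ℝ) → ℝ) :=
      (contDiff_of_mem_polyFun (taylorPoly n (q + 1) h a).2).differentiable one_ne_zero
    have hR := (H.differentiable (by simp)).sub hT
    have hpartial : ∀ i, pder n i (h - (taylorPoly n (q + 1) h a : (Fin n → ℝ) → ℝ)) =
        pder n i h - (taylorPoly n q (pder n i h) a : (Fin n → ℝ) → ℝ) := fun i => by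
      rw [pder_sub (H.differentiable (by simp)) hT, pder_taylorPoly H]
    have hbound : fderiv ℝ (h - (taylorPoly n (q + 1) h a : (Fin n → ℝ) → ℝ)) =O[𝓝 a]
        fun y => ∑ i, ‖pder n i (h - (taylorPoly n (q + 1) h a : (Fin n → ℝ) → ℝ)) y‖ :=
      IsBigO.of_bound 1 (Eventually.of_forall fun y => by
        rw [one_mul, Real.norm_of_nonneg (by positivity)]
        exact ContinuousLinearMap.opNorm_le_sum_norm_apply_single _)
    refine isLittleO_pow_succ_of_fderiv (Eventually.of_forall hR)
      (by rw [Pi.sub_apply, taylorPoly_apply_self, sub_self]) (hbound.trans_isLittleO ?_)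
    simp only [hpartial, ← Finset.sum_fn]
    exact IsLittleO.sum fun i _ => (ih (contDiff_pder i H)).norm_left

end TaylorTheorem

section TaylorIdeal

variable {n : ℕ}

instance (p : ℕ) : FiniteDimensional ℝ (Pp n p) := by
  let ev : MvPolynomial (Fin n) ℝ →ₗ[ℝ] (Fin n → ℝ) → ℝ :=
    { toFun := fun P x => MvPolynomial.eval x P
      map_add' := fun P Q => by ext; simp
      map_smul' := fun c P => by ext; simp }
  refine Submodule.finiteDimensional_of_le
    (S₂ := (MvPolynomial.restrictTotalDegree (Fin n) ℝ p).map ev) ?_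
  rintro f ⟨P, hP, rfl⟩
  exact ⟨P, (MvPolynomial.mem_restrictTotalDegree _ _ _).mpr hP, rfl⟩

noncomputable def tIdealSubmodule (n q p : ℕ) (hpq : p ≤ q) (X : Set (Fin n → ℝ))
    (a : Fin n → ℝ) : Submodule ℝ (Pp n p) where
  carrier := tIdeal n q p X a
  zero_mem' := ⟨0, contDiff_zero_fun, fun _ _ => rfl, by
    simpa using (taylorPoly_smul p 0 0 a).symm⟩
  add_mem' := by
    rintro _ _ ⟨h₁, hC₁, hX₁, rfl⟩ ⟨h₂, hC₂, hX₂, rfl⟩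
    exact ⟨h₁ + h₂, hC₁.add hC₂, fun x hx => by simp [hX₁ x hx, hX₂ x hx],
      (taylorPoly_add (by exact_mod_cast hpq) hC₁ hC₂ a).symm⟩
  smul_mem' := by
    rintro c _ ⟨h, hC, hX, rfl⟩
    exact ⟨c • h, hC.const_smul c, fun x hx => by simp [hX x hx], (taylorPoly_smul p c h a).symm⟩

lemma tIdeal_anti {p q q' : ℕ} (hqq' : q ≤ q') {X : Set (Fin n → ℝ)} {a : Fin n → ℝ} :
    tIdeal n q' p X a ⊆ tIdeal n q p X a := by
  rintro _ ⟨h, hC, hX, rfl⟩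
  exact ⟨h, hC.of_le (by exact_mod_cast hqq'), hX, rfl⟩

lemma exists_tIdeal_eq_of_le (p : ℕ) (X : Set (Fin n → ℝ)) (a : Fin n → ℝ) :
    ∃ s₀, p ≤ s₀ ∧ ∀ q, s₀ ≤ q → tIdeal n q p X a = tIdeal n s₀ p X a := by
  let S : ℕ →o (Submodule ℝ (Pp n p))ᵒᵈ :=
    ⟨fun j => OrderDual.toDual (tIdealSubmodule n (p + j) p (by omega) X a),
      fun j j' hjj' => tIdeal_anti (by omega)⟩
  obtain ⟨j, hj⟩ := IsArtinian.monotone_stabilizes S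
  refine ⟨p + j, by omega, fun q hq => ?_⟩
  obtain ⟨k, rfl⟩ := Nat.exists_eq_add_of_le hq
  have := congrArg (fun N => ((OrderDual.ofDual N : Submodule ℝ (Pp n p)) : Set (Pp n p)))
    (hj (j + k) (by omega))
  rw [add_assoc]
  exact this.symm

lemma taylorPoly_mem_tIdeal_of_stable {p s₀ : ℕ} {X : Set (Fin n → ℝ)} {a : Fin n → ℝ}
    (hs₀ : ∀ q, s₀ ≤ q → tIdeal n q p X a = tIdeal n s₀ p X a) {g : (Fin n → ℝ) → ℝ}
    (hC : ContDiff ℝ s₀ g) (hX : ∀ x ∈ X, g x = 0) (q : ℕ) :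
    taylorPoly n p g a ∈ tIdeal n q p X a := by
  refine tIdeal_anti (le_max_left q s₀) ?_
  rw [hs₀ _ (le_max_right _ _)]
  exact ⟨g, hC, hX, rfl⟩

theorem mem_formalIdeal_of_forall_truncSeries_mem {X : Set (Fin n → ℝ)} {a : Fin n → ℝ}
    {c : (Fin n → ℕ) → ℝ} (hc : ∀ q, truncSeries n q c a ∈ tIdeal n q q X a) :
    c ∈ formalIdeal n X a := by
  intro q ε hε
  obtain ⟨h, hC, hX, hq⟩ := hc q
  obtain ⟨δ, hδ, hball⟩ := Metric.eventually_nhds_iff.mp ((isLittleO_sub_taylorPoly hC a).def hε)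
  refine ⟨δ, hδ, fun x hx hxa => ?_⟩
  have := hball (by rwa [dist_eq_norm])
  rwa [Pi.sub_apply, hX x hx, zero_sub, norm_neg, Real.norm_eq_abs, norm_pow, norm_norm, ← hq]
    at this

lemma truncSeries_eq_taylorPoly {q : ℕ} {c : (Fin n → ℕ) → ℝ} {h : (Fin n → ℝ) → ℝ}
    {a : Fin n → ℝ} (hc : ∀ α, ∑ i, α i ≤ q → c α * ∏ i, ((α i).factorial : ℝ) = dAlpha n α h a) :
    truncSeries n q c a = taylorPoly n q h a :=
  Finset.sum_congr rfl fun α hα => by rw [hc α (mem_degSet.mp hα)]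

lemma dAlpha_apply_eq_of_forall_taylorPoly_succ_eq {p : ℕ} {f : ℕ → (Fin n → ℝ) → ℝ}
    {a : Fin n → ℝ} (hf : ∀ k, taylorPoly n (p + k) (f (k + 1)) a = taylorPoly n (p + k) (f k) a)
    {β : Fin n → ℕ} {j k : ℕ} (hβ : ∑ i, β i ≤ p + min j k) :
    dAlpha n β (f j) a = dAlpha n β (f k) a := by
  wlog hjk : j ≤ k generalizing j k
  · exact (this (by rwa [min_comm]) (by omega)).symm
  rw [min_eq_left hjk] at hβ
  induction k, hjk using Nat.le_induction with
  | base => rfl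
  | succ k hjk ih =>
    rw [ih, dAlpha_apply_eq_of_taylorPoly_eq (hf k) (by omega)]

end TaylorIdeal

theorem tIdeal_subset_formalIdeal_general (n p s : ℕ) (X : Set (Fin n → ℝ))
    (a : Fin n → ℝ)
    (hstab : ∀ q, s ≤ q → tIdeal n q p X a = tIdeal n s p X a) :
    tIdeal n s p X a ⊆ {Q | ∃ c ∈ formalIdeal n X a, Q = truncSeries n p c a} := by
  intro Q hQ
  choose σ hσ_le hσ using fun q => exists_tIdeal_eq_of_le (n := n) q X a
  obtain ⟨h₀, hC₀, hX₀, rfl⟩ : Q ∈ tIdeal n (σ p) p X a :=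
    tIdeal_anti (le_max_right s _) (hstab _ (le_max_left _ _) ▸ hQ)
  obtain ⟨f, rfl, hf⟩ := exists_seq_of_forall_exists_succ
    (fun k g => ContDiff ℝ (σ (p + k)) g ∧ ∀ x ∈ X, g x = 0)
    (fun k g g' => taylorPoly n (p + k) g' a = taylorPoly n (p + k) g a) ⟨hC₀, hX₀⟩
    fun k g ⟨hC, hX⟩ =>
      let ⟨g', hC', hX', hg'⟩ := taylorPoly_mem_tIdeal_of_stable (hσ _) hC hX (σ (p + k + 1))
      ⟨g', ⟨hC', hX'⟩, hg'.symm⟩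
  set c : (Fin n → ℕ) → ℝ := fun α => dAlpha n α (f (∑ i, α i)) a / ∏ i, ((α i).factorial : ℝ)
  have htrunc : ∀ q k, q ≤ p + k → truncSeries n q c a = taylorPoly n q (f k) a :=
    fun q k hqk => truncSeries_eq_taylorPoly fun α hα => by
      rw [div_mul_cancel₀ _ (by positivity)]
      exact dAlpha_apply_eq_of_forall_taylorPoly_succ_eq (fun k => (hf k).2) (by omega)
  refine ⟨c, mem_formalIdeal_of_forall_truncSeries_mem fun q => ?_, (htrunc p 0 (by omega)).symm⟩
  rw [htrunc q q (by omega)]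
  exact ⟨f q, (hf q).1.1.of_le (by exact_mod_cast (hσ_le (p + q)).trans' (by omega)),
    (hf q).1.2, rfl⟩

/-- If `s ≥ s_X(a,p)` (i.e. `s ≥ p` and the sequence `T^p_a I^q(X)` has stabilized
at `s`), then `T^p_a I^s(X) ⊆ T^p_a F_a(X)`. -/
theorem tIdeal_subset_formalIdeal (n p s : ℕ) (X : Set (Fin n → ℝ))
    (hX : IsClosed X) (a : Fin n → ℝ) (ha : a ∈ X) (hps : p ≤ s)
    (hstab : ∀ q, s ≤ q → tIdeal n q p X a = tIdeal n s p X a) :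
    tIdeal n s p X a ⊆ {Q | ∃ c ∈ formalIdeal n X a, Q = truncSeries n p c a} :=
  tIdeal_subset_formalIdeal_general n p s X a hstab
end
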